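/- arXiv:2503.17235 — 8 statements merged into one kernel-verified Lean document; each statement's English description precedes it below -/
import Mathlib

section
/- Let E > 0 be a real number and K ≥ 1 a natural number. Define the densities p_E^{(K)} : ℂ^K → ℝ by p_E^{(K)}(x) = π^{−K}·(1+K·E)^{−1}·exp(−Σ_{i=1}^K |x_i|² + E·|Σ_{i=1}^K x_i|²/(1+K·E)) and p_E : ℂ → ℝ by p_E(x) = (π(1+E))^{−1}·exp(−|x|²/(1+E)). Then the Kullback–Leibler divergence (in natural units) satisfies ∫_{ℂ^K} p_E^{(K)}(x) · ln( p_E^{(K)}(x) / Π_{i=1}^K p_E(x_i) ) dx = ln( (1+E)^K / (1+K·E) ), where the integral is the Lebesgue integral over ℝ^{2K} upon identifying ℂ^K with ℝ^{2K}. -/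
/-!
Write `S = ∑ |xᵢ|²` and `T = |∑ xᵢ|²`. The log-likelihood ratio of the joint density against the
product of its marginals is `L + E T / (1 + K E) - E S / (1 + E)` with
`L = ln((1 + E)^K / (1 + K E))`. A unitary change of variables sending `(1, …, 1) / √K` to a
coordinate axis turns `T` into `K |x₀|²` and fixes `S`; in the new coordinates the joint density
is a product of centred complex Gaussians, of variance `1 + K E` in coordinate `0` and `1` in the
others. Hence `T` and `S` have means `K (1 + K E)` and `K (1 + E)`, the two correction terms
cancel, and the divergence is `L`.
-/

open MeasureTheory Real

noncomputable def complexGaussianPDF (σ : ℝ) (z : ℂ) : ℝ := (π * σ)⁻¹ * rexp (-‖z‖ ^ 2 / σ)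

section ComplexGaussian

variable {σ : ℝ}

theorem integral_sq_norm_pow_mul_complexGaussianPDF (hσ : 0 < σ) (n : ℕ) :
    ∫ z, (‖z‖ ^ 2) ^ n * complexGaussianPDF σ z = n.factorial * σ ^ n := by
  have h := Complex.integral_rpow_mul_exp_neg_mul_rpow (p := 2) (q := 2 * n) one_le_two
    (by linarith [n.cast_nonneg (α := ℝ)]) (inv_pos.2 hσ)
  have hpow : ∀ z : ℂ, ‖z‖ ^ (2 * n : ℝ) * rexp (-σ⁻¹ * ‖z‖ ^ (2 : ℝ)) =
      (‖z‖ ^ 2) ^ n * rexp (-‖z‖ ^ 2 / σ) := fun z => by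
    norm_cast
    ring_nf
  simp_rw [hpow] at h
  simp_rw [complexGaussianPDF, mul_left_comm _ (π * σ)⁻¹, integral_const_mul, h]
  rw [show ((2 * n : ℝ) + 2) / 2 = (n : ℝ) + 1 by ring, Real.Gamma_nat_eq_factorial,
    show -(2 * (n : ℝ) + 2) / 2 = -((n + 1 : ℕ) : ℝ) by push_cast; ring,
    rpow_neg (inv_pos.2 hσ).le, rpow_natCast, inv_pow, inv_inv]
  field_simp
  ring

theorem integral_complexGaussianPDF (hσ : 0 < σ) : ∫ z, complexGaussianPDF σ z = 1 := by
  simpa using integral_sq_norm_pow_mul_complexGaussianPDF hσ 0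

theorem integral_sq_norm_mul_complexGaussianPDF (hσ : 0 < σ) :
    ∫ z, ‖z‖ ^ 2 * complexGaussianPDF σ z = σ := by
  simpa using integral_sq_norm_pow_mul_complexGaussianPDF hσ 1

end ComplexGaussian

section ProductGaussian

variable {ι : Type*} [Fintype ι] {σ : ι → ℝ}

theorem prod_complexGaussianPDF (x : ι → ℂ) :
    ∏ i, complexGaussianPDF (σ i) (x i) =
      (π ^ Fintype.card ι * ∏ i, σ i)⁻¹ * rexp (-∑ i, ‖x i‖ ^ 2 / σ i) := by
  simp_rw [complexGaussianPDF, Finset.prod_mul_distrib, ← exp_sum, Finset.prod_inv_distrib,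
    Finset.prod_mul_distrib, Finset.prod_const, Finset.card_univ, neg_div, Finset.sum_neg_distrib]

theorem integral_prod_complexGaussianPDF (hσ : ∀ i, 0 < σ i) :
    ∫ x : ι → ℂ, ∏ i, complexGaussianPDF (σ i) (x i) = 1 := by
  rw [integral_fintype_prod_volume_eq_prod]
  exact Finset.prod_eq_one fun i _ => integral_complexGaussianPDF (hσ i)

theorem integrable_prod_complexGaussianPDF (hσ : ∀ i, 0 < σ i) :
    Integrable fun x : ι → ℂ => ∏ i, complexGaussianPDF (σ i) (x i) :=
  .of_integral_ne_zero (by simp [integral_prod_complexGaussianPDF hσ])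

variable [DecidableEq ι]

theorem prod_complexGaussianPDF_one_add_ite (i₀ : ι) {a : ℝ} (ha : 1 + a ≠ 0) (x : ι → ℂ) :
    ∏ j, complexGaussianPDF (1 + if j = i₀ then a else 0) (x j) =
      (π ^ Fintype.card ι * (1 + a))⁻¹ *
        rexp (-∑ j, ‖x j‖ ^ 2 + a / (1 + a) * ‖x i₀‖ ^ 2) := by
  have hdiv : ∀ j, ‖x j‖ ^ 2 / (1 + if j = i₀ then a else 0) =
      ‖x j‖ ^ 2 - if j = i₀ then a / (1 + a) * ‖x j‖ ^ 2 else 0 := fun j => by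
    split_ifs
    · field_simp
      ring
    · simp
  have hprod : ∏ j, (1 + if j = i₀ then a else 0) = 1 + a := by simp [add_ite]
  rw [prod_complexGaussianPDF, hprod, Finset.sum_congr rfl fun j _ => hdiv j,
    Finset.sum_sub_distrib, Finset.sum_ite_eq', if_pos (Finset.mem_univ _)]
  ring_nf

theorem sq_norm_mul_prod_complexGaussianPDF (j : ι) (x : ι → ℂ) :
    ‖x j‖ ^ 2 * ∏ i, complexGaussianPDF (σ i) (x i) =
      ∏ i, (if i = j then ‖x i‖ ^ 2 else 1) * complexGaussianPDF (σ i) (x i) := by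
  rw [Finset.prod_mul_distrib, Finset.prod_ite_eq' Finset.univ j, if_pos (Finset.mem_univ j)]

theorem integral_sq_norm_mul_prod_complexGaussianPDF (hσ : ∀ i, 0 < σ i) (j : ι) :
    ∫ x : ι → ℂ, ‖x j‖ ^ 2 * ∏ i, complexGaussianPDF (σ i) (x i) = σ j := by
  simp_rw [sq_norm_mul_prod_complexGaussianPDF j, integral_fintype_prod_volume_eq_prod
    (fun i z => (if i = j then ‖z‖ ^ 2 else 1) * complexGaussianPDF (σ i) z)]
  have h : ∀ i, ∫ z, (if i = j then ‖z‖ ^ 2 else 1) * complexGaussianPDF (σ i) z =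
      if i = j then σ i else 1 := fun i => by
    split_ifs
    · exact integral_sq_norm_mul_complexGaussianPDF (hσ i)
    · simpa using integral_complexGaussianPDF (hσ i)
  rw [Finset.prod_congr rfl fun i _ => h i, Finset.prod_ite_eq' Finset.univ j,
    if_pos (Finset.mem_univ j)]

theorem integrable_sq_norm_mul_prod_complexGaussianPDF (hσ : ∀ i, 0 < σ i) (j : ι) :
    Integrable fun x : ι → ℂ => ‖x j‖ ^ 2 * ∏ i, complexGaussianPDF (σ i) (x i) :=
  .of_integral_ne_zero (by simp [integral_sq_norm_mul_prod_complexGaussianPDF hσ, (hσ j).ne'])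

theorem integral_prod_complexGaussianPDF_mul_quadratic (hσ : ∀ i, 0 < σ i) (a : ℝ)
    (c : ι → ℝ) :
    ∫ x : ι → ℂ, (∏ i, complexGaussianPDF (σ i) (x i)) * (a + ∑ j, c j * ‖x j‖ ^ 2) =
      a + ∑ j, c j * σ j := by
  simp_rw [mul_add, Finset.mul_sum, mul_left_comm _ (c _), mul_comm (∏ i, _) (‖_‖ ^ 2),
    mul_comm (∏ i, _) a]
  have hmoment (j : ι) := (integrable_sq_norm_mul_prod_complexGaussianPDF hσ j).const_mul (c j)
  rw [integral_add ((integrable_prod_complexGaussianPDF hσ).const_mul a)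
      (integrable_finsetSum _ fun j _ => hmoment j),
    integral_finsetSum _ fun j _ => hmoment j]
  simp_rw [integral_const_mul, integral_prod_complexGaussianPDF hσ,
    integral_sq_norm_mul_prod_complexGaussianPDF hσ, mul_one]

end ProductGaussian

section UnitaryChangeOfVariables

theorem LinearEquiv.integral_comp_of_norm_det_eq_one {E F : Type*} [NormedAddCommGroup E]
    [NormedSpace ℂ E] [FiniteDimensional ℂ E] [MeasurableSpace E] [BorelSpace E]
    [NormedAddCommGroup F] [NormedSpace ℝ F] (μ : Measure E) [μ.IsAddHaarMeasure]
    (f : E ≃ₗ[ℂ] E) (hf : ‖LinearMap.det (f : E →ₗ[ℂ] E)‖ = 1) (g : E → F) :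
    ∫ x, g (f x) ∂μ = ∫ x, g x ∂μ := by
  set fℝ : E →ₗ[ℝ] E := (f : E →ₗ[ℂ] E).restrictScalars ℝ
  have hdet : LinearMap.det fℝ = 1 := by
    rw [LinearMap.det_restrictScalars, Algebra.norm_complex_apply, Complex.normSq_eq_norm_sq, hf,
      one_pow]
  have hf_preserving : MeasurePreserving f μ μ :=
    ⟨fℝ.continuous_of_finiteDimensional.measurable, by
      simpa [hdet, fℝ] using
        Measure.map_linearMap_addHaar_eq_smul_addHaar μ (f := fℝ) (by simp [hdet])⟩
  exact hf_preserving.integral_comp f.toContinuousLinearEquiv.toHomeomorph.measurableEmbedding g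

variable {ι : Type*} [Fintype ι]

theorem LinearIsometryEquiv.integral_comp_euclideanSpace {F : Type*} [NormedAddCommGroup F]
    [NormedSpace ℝ F] (U : EuclideanSpace ℂ ι ≃ₗᵢ[ℂ] EuclideanSpace ℂ ι) (g : (ι → ℂ) → F) :
    ∫ x, g (U (WithLp.toLp 2 x)).ofLp = ∫ x, g x := by
  set e := WithLp.linearEquiv 2 ℂ (ι → ℂ)
  refine (e.symm ≪≫ₗ U.toLinearEquiv ≪≫ₗ e).integral_comp_of_norm_det_eq_one volume ?_ g
  rw [LinearEquiv.coe_trans, LinearEquiv.coe_trans, LinearMap.det_conj,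
    ← LinearMap.normDet_eq_norm_det]
  exact U.toLinearIsometry.normDet_eq_one

/-- Take for `U` a unitary sending the basis vector `e i` to `v = (1, …, 1) / √n`; then
`∑ j, U y j = √n ⟪v, U y⟫ = √n ⟪e i, y⟫`. -/
theorem EuclideanSpace.exists_linearIsometryEquiv_sum_apply_eq (i : ι) :
    ∃ U : EuclideanSpace ℂ ι ≃ₗᵢ[ℂ] EuclideanSpace ℂ ι,
      ∀ y, ∑ j, U y j = √(Fintype.card ι) * y i := by
  set n : ℝ := (Fintype.card ι : ℝ)
  have hn : 0 < √n := sqrt_pos.2 (by simpa [n] using Fintype.card_pos_iff.2 ⟨i⟩)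
  set v : EuclideanSpace ℂ ι := ((√n)⁻¹ : ℂ) • WithLp.toLp 2 (fun _ => 1)
  have hv : ‖v‖ = 1 := by
    simp only [v, norm_smul, EuclideanSpace.norm_eq]
    simpa [abs_of_nonneg (sqrt_nonneg n)] using inv_mul_cancel₀ hn.ne'
  obtain ⟨b, hb⟩ := Orthonormal.exists_orthonormalBasis_extension_of_card_eq (𝕜 := ℂ)
    (by simp) (v := fun _ => v) (s := {i}) (by simp [hv])
  refine ⟨b.repr.symm, fun y => ?_⟩
  have hinner : inner ℂ v (b.repr.symm y) = y i := by
    rw [← hb i rfl, ← b.repr_apply_apply, LinearIsometryEquiv.apply_symm_apply]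
  have hn' : (√n : ℂ) ≠ 0 := by exact_mod_cast hn.ne'
  rw [← hinner, PiLp.inner_apply, Finset.mul_sum]
  refine Finset.sum_congr rfl fun j _ => ?_
  simp only [v, PiLp.smul_apply, smul_eq_mul, mul_one, RCLike.inner_apply, map_inv₀,
    Complex.conj_ofReal]
  field_simp

theorem integral_comp_sum_eq_integral_comp_sqrt_card_mul (i : ι) (G : ℝ → ℂ → ℝ) :
    ∫ x : ι → ℂ, G (∑ j, ‖x j‖ ^ 2) (∑ j, x j) =
      ∫ x : ι → ℂ, G (∑ j, ‖x j‖ ^ 2) (√(Fintype.card ι) * x i) := by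
  obtain ⟨U, hU⟩ := EuclideanSpace.exists_linearIsometryEquiv_sum_apply_eq i
  have hnorm : ∀ y, ∑ j, ‖U y j‖ ^ 2 = ∑ j, ‖y j‖ ^ 2 := fun y => by
    rw [← EuclideanSpace.norm_sq_eq, ← EuclideanSpace.norm_sq_eq, U.norm_map]
  rw [← U.integral_comp_euclideanSpace]
  simp_rw [hU, hnorm]

end UnitaryChangeOfVariables

theorem log_heterodyne_joint_div_marginals {E : ℝ} (hE : 0 ≤ E) (K : ℕ) (x : Fin K → ℂ) :
    Real.log ((π ^ K * (1 + K * E))⁻¹ *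
        rexp (-∑ i, ‖x i‖ ^ 2 + E * ‖∑ i, x i‖ ^ 2 / (1 + K * E)) /
          ∏ i, complexGaussianPDF (1 + E) (x i)) =
      Real.log ((1 + E) ^ K / (1 + K * E)) + E / (1 + K * E) * ‖∑ i, x i‖ ^ 2 -
        E / (1 + E) * ∑ i, ‖x i‖ ^ 2 := by
  have h1E : 0 < 1 + E := by positivity
  have h1KE : 0 < 1 + K * E := by positivity
  rw [prod_complexGaussianPDF, Finset.prod_const, Finset.card_univ, Fintype.card_fin,
    ← Finset.sum_div, mul_div_mul_comm, ← exp_sub, log_mul (by positivity) (exp_pos _).ne',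
    log_exp, show (π ^ K * (1 + K * E))⁻¹ / (π ^ K * (1 + E) ^ K)⁻¹ = (1 + E) ^ K / (1 + K * E)
      by field_simp]
  field_simp
  ring

/-- The Kullback–Leibler divergence (in natural units) between the joint heterodyne
outcome density `p_E^{(K)}` of `K` detectors and the product of its marginals equals
`ln((1+E)^K / (1+KE))`. -/
theorem heterodyne_relative_entropy (E : ℝ) (hE : 0 < E) (K : ℕ) (hK : 1 ≤ K) :
    ∫ x : Fin K → ℂ,
        ((Real.pi ^ K * (1 + (K : ℝ) * E))⁻¹ *
            Real.exp (-∑ i, ‖x i‖ ^ 2 +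
              E * ‖∑ i, x i‖ ^ 2 / (1 + (K : ℝ) * E))) *
          Real.log
            (((Real.pi ^ K * (1 + (K : ℝ) * E))⁻¹ *
                Real.exp (-∑ i, ‖x i‖ ^ 2 +
                  E * ‖∑ i, x i‖ ^ 2 / (1 + (K : ℝ) * E))) /
              ∏ i, (Real.pi * (1 + E))⁻¹ * Real.exp (-‖x i‖ ^ 2 / (1 + E))) =
      Real.log ((1 + E) ^ K / (1 + (K : ℝ) * E)) := by
  have h1KE : 0 < 1 + K * E := by positivity
  set L := Real.log ((1 + E) ^ K / (1 + (K : ℝ) * E))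
  set i₀ : Fin K := ⟨0, hK⟩
  set σ : Fin K → ℝ := fun j => 1 + if j = i₀ then K * E else 0
  have hσ : ∀ j, 0 < σ j := fun j => by positivity
  set c : Fin K → ℝ := fun j => (if j = i₀ then K * E / (1 + K * E) else 0) - E / (1 + E)
  set G : ℝ → ℂ → ℝ := fun s w => (π ^ K * (1 + K * E))⁻¹ *
    rexp (-s + E * ‖w‖ ^ 2 / (1 + K * E)) * (L + E / (1 + K * E) * ‖w‖ ^ 2 - E / (1 + E) * s)
  change ∫ x : Fin K → ℂ, _ * Real.log (_ / ∏ i, complexGaussianPDF (1 + E) (x i)) = L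
  calc _ = ∫ x : Fin K → ℂ, G (∑ j, ‖x j‖ ^ 2) (∑ j, x j) := by
        simp_rw [log_heterodyne_joint_div_marginals hE.le K]
        rfl
    _ = ∫ x : Fin K → ℂ, G (∑ j, ‖x j‖ ^ 2) (√K * x i₀) := by
        simpa using integral_comp_sum_eq_integral_comp_sqrt_card_mul i₀ G
    _ = ∫ x : Fin K → ℂ, (∏ j, complexGaussianPDF (σ j) (x j)) * (L + ∑ j, c j * ‖x j‖ ^ 2) := by
        congr 1 with x
        have hnorm : ‖(√K : ℂ) * x i₀‖ ^ 2 = K * ‖x i₀‖ ^ 2 := by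
          rw [norm_mul, mul_pow, Complex.norm_real, norm_eq_abs, sq_abs, sq_sqrt K.cast_nonneg]
        rw [prod_complexGaussianPDF_one_add_ite i₀ h1KE.ne', Fintype.card_fin]
        simp only [G, hnorm, c, sub_mul, ite_mul, zero_mul, Finset.sum_sub_distrib,
          Finset.sum_ite_eq', Finset.mem_univ, if_true, Finset.mul_sum]
        ring_nf
    _ = L + ∑ j, c j * σ j := integral_prod_complexGaussianPDF_mul_quadratic hσ L c
    _ = L := by
        simp only [σ, c, mul_add, mul_one, mul_ite, sub_mul, ite_mul, zero_mul, mul_zero,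
          Finset.sum_add_distrib, Finset.sum_sub_distrib, Finset.sum_ite_eq', Finset.mem_univ,
          if_true, Finset.sum_const, Finset.card_univ, Fintype.card_fin, nsmul_eq_mul, add_eq_left]
        field_simp
        ring
end

section
/- Let E > 0 be a real number and K ≥ 1 a natural number. Define q̃_E^{(K)} : ℝ^K → ℝ by q̃_E^{(K)}(t) = π^{−K/2}·(1+2K·E)^{−1/2}·exp(−Σ_{i=1}^K t_i² + 2E·(Σ_{i=1}^K t_i)²/(1+2K·E)) and q̃_E : ℝ → ℝ by q̃_E(t) = (π(1+2E))^{−1/2}·exp(−t²/(1+2E)). Then ∫_{ℝ^K} q̃_E^{(K)}(t) · ln( q̃_E^{(K)}(t) / Π_{i=1}^K q̃_E(t_i) ) dt = (1/2)·ln( (1+2E)^K / (1+2K·E) ). -/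
/-!
Write `q = homodyneJointPDF E K` and `σ = 1 + 2KE`, `τ = 1 + 2E`. Pointwise,
`log (q t / ∏ q̃_E (t i)) = C - (2E/τ) ∑ tᵢ² + (2E/σ) (∑ tᵢ)²` with `C = ½ log (τ^K / σ)`, so the
integrand depends on `t` only through `‖t‖²` and `⟪𝟙, t⟫`. A reflection sending `𝟙/√K` to the
first basis vector preserves Lebesgue measure and turns `q` into a product of centred Gaussians
with precisions `σ⁻¹, 1, …, 1`. Their second moments `1 / (2 cᵢ)` show that the quadratic part of
the log-ratio has mean zero, leaving `C`.
-/

open MeasureTheory Real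

theorem integrable_sq_mul_exp_neg_mul_sq {b : ℝ} (hb : 0 < b) :
    Integrable fun x : ℝ => x ^ 2 * exp (-b * x ^ 2) := by
  simpa only [rpow_two] using integrable_rpow_mul_exp_neg_mul_sq hb (s := 2) (by norm_num)

open ProbabilityTheory in
theorem integral_sq_mul_exp_neg_mul_sq {b : ℝ} (hb : 0 < b) :
    ∫ x : ℝ, x ^ 2 * exp (-b * x ^ 2) = √(π / b) / (2 * b) := by
  obtain ⟨v, hv⟩ : ∃ v : NNReal, (v : ℝ) = (2 * b)⁻¹ := ⟨⟨(2 * b)⁻¹, by positivity⟩, rfl⟩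
  have hv0 : v ≠ 0 := by rintro rfl; simp at hv; linarith
  have hmoment : ∫ x, x ^ 2 ∂gaussianReal 0 v = (2 * b)⁻¹ := by
    rw [← variance_of_integral_eq_zero (X := fun x => x) measurable_id.aemeasurable
      integral_id_gaussianReal, variance_fun_id_gaussianReal, hv]
  have hpdf (x : ℝ) : gaussianPDFReal 0 v x = (√(π / b))⁻¹ * exp (-b * x ^ 2) := by
    simp only [gaussianPDFReal_def, hv, sub_zero]
    congr 3 <;> field_simp
  rw [integral_gaussianReal_eq_integral_smul hv0] at hmoment
  simp only [hpdf, smul_eq_mul, mul_assoc, integral_const_mul] at hmoment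
  have : √(π / b) ≠ 0 := by positivity
  field_simp at hmoment ⊢
  exact hmoment

section DiagonalGaussian

variable {ι : Type*} [Fintype ι]

theorem exp_neg_sum_mul_sq (c u : ι → ℝ) :
    exp (-∑ i, c i * u i ^ 2) = ∏ i, exp (-c i * u i ^ 2) := by
  simp only [← exp_sum, neg_mul, Finset.sum_neg_distrib]

theorem sq_mul_exp_neg_sum_mul_sq [DecidableEq ι] (c u : ι → ℝ) (j : ι) :
    u j ^ 2 * exp (-∑ i, c i * u i ^ 2) =
      ∏ i, (if i = j then u i ^ 2 else 1) * exp (-c i * u i ^ 2) := by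
  rw [Finset.prod_mul_distrib, Finset.prod_ite_eq', exp_neg_sum_mul_sq, if_pos (Finset.mem_univ j)]

theorem integrable_exp_neg_sum_mul_sq {c : ι → ℝ} (hc : ∀ i, 0 < c i) :
    Integrable fun u : ι → ℝ => exp (-∑ i, c i * u i ^ 2) := by
  simpa only [exp_neg_sum_mul_sq, volume_pi] using
    Integrable.fintype_prod fun i => integrable_exp_neg_mul_sq (hc i)

theorem integrable_sq_mul_exp_neg_sum_mul_sq {c : ι → ℝ} (hc : ∀ i, 0 < c i) (j : ι) :
    Integrable fun u : ι → ℝ => u j ^ 2 * exp (-∑ i, c i * u i ^ 2) := by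
  classical
  simp only [sq_mul_exp_neg_sum_mul_sq c _ j, volume_pi]
  refine Integrable.fintype_prod
    (f := fun i x => (if i = j then x ^ 2 else 1) * exp (-c i * x ^ 2)) fun i => ?_
  split_ifs
  · exact integrable_sq_mul_exp_neg_mul_sq (hc i)
  · simpa only [one_mul] using integrable_exp_neg_mul_sq (hc i)

theorem integral_exp_neg_sum_mul_sq (c : ι → ℝ) :
    ∫ u : ι → ℝ, exp (-∑ i, c i * u i ^ 2) = ∏ i, √(π / c i) := by
  simp only [exp_neg_sum_mul_sq,
    integral_fintype_prod_volume_eq_prod (fun i x => exp (-c i * x ^ 2)), integral_gaussian]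

theorem integral_sq_mul_exp_neg_sum_mul_sq (c : ι → ℝ) {j : ι} (hc : 0 < c j) :
    ∫ u : ι → ℝ, u j ^ 2 * exp (-∑ i, c i * u i ^ 2) = (∏ i, √(π / c i)) / (2 * c j) := by
  classical
  have hfactor (i : ι) : ∫ x : ℝ, (if i = j then x ^ 2 else 1) * exp (-c i * x ^ 2) =
      √(π / c i) * if i = j then (2 * c j)⁻¹ else 1 := by
    split_ifs with h
    · rw [h, integral_sq_mul_exp_neg_mul_sq hc, div_eq_mul_inv]
    · simp only [one_mul, mul_one, integral_gaussian]
  simp_rw [sq_mul_exp_neg_sum_mul_sq c _ j]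
  rw [integral_fintype_prod_volume_eq_prod
    (fun i x => (if i = j then x ^ 2 else 1) * exp (-c i * x ^ 2))]
  simp only [hfactor, Finset.prod_mul_distrib, Finset.prod_ite_eq', Finset.mem_univ, if_true,
    div_eq_mul_inv]

theorem integral_exp_neg_sum_mul_sq_mul_add_sum {c : ι → ℝ} (hc : ∀ i, 0 < c i) (C : ℝ)
    (d : ι → ℝ) :
    ∫ u : ι → ℝ, exp (-∑ i, c i * u i ^ 2) * (C + ∑ j, d j * u j ^ 2) =
      (∏ i, √(π / c i)) * (C + ∑ j, d j / (2 * c j)) := by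
  have hint (j : ι) : Integrable fun u : ι → ℝ => d j * (u j ^ 2 * exp (-∑ i, c i * u i ^ 2)) :=
    (integrable_sq_mul_exp_neg_sum_mul_sq hc j).const_mul _
  have hexpand (u : ι → ℝ) : exp (-∑ i, c i * u i ^ 2) * (C + ∑ j, d j * u j ^ 2) =
      exp (-∑ i, c i * u i ^ 2) * C + ∑ j, d j * (u j ^ 2 * exp (-∑ i, c i * u i ^ 2)) := by
    rw [mul_add, Finset.mul_sum]
    congr 1
    exact Finset.sum_congr rfl fun j _ => by ring
  simp_rw [hexpand]
  rw [integral_add ((integrable_exp_neg_sum_mul_sq hc).mul_const _)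
    (integrable_finsetSum _ fun j _ => hint j), integral_finsetSum _ fun j _ => hint j,
    integral_mul_const, integral_exp_neg_sum_mul_sq]
  simp only [integral_const_mul, integral_sq_mul_exp_neg_sum_mul_sq c (hc _)]
  rw [mul_add, Finset.mul_sum]
  congr 1
  exact Finset.sum_congr rfl fun j _ => by ring

end DiagonalGaussian

/-- The reflection in the hyperplane orthogonal to `v - w` is a measure-preserving isometry
exchanging `v` and `w`. -/
theorem integral_comp_norm_inner_eq {F G : Type*} [NormedAddCommGroup F] [InnerProductSpace ℝ F]
    [FiniteDimensional ℝ F] [MeasurableSpace F] [BorelSpace F]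
    [NormedAddCommGroup G] [NormedSpace ℝ G] {v w : F} (h : ‖v‖ = ‖w‖) (f : ℝ → ℝ → G) :
    ∫ x, f ‖x‖ (inner ℝ v x) = ∫ x, f ‖x‖ (inner ℝ w x) := by
  set R : F ≃ₗᵢ[ℝ] F := (ℝ ∙ (v - w))ᗮ.reflection
  have hR : R v = w := Submodule.reflection_sub h
  conv_rhs => rw [← R.measurePreserving.integral_comp R.toHomeomorph.measurableEmbedding]
  simp only [← hR, R.norm_map, R.inner_map_map]

theorem integral_comp_sum_sq_sum_eq {ι G : Type*} [Fintype ι]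
    [NormedAddCommGroup G] [NormedSpace ℝ G] (f : ℝ → ℝ → G) (i₀ : ι) :
    ∫ t : ι → ℝ, f (∑ i, t i ^ 2) (∑ i, t i) =
      ∫ t : ι → ℝ, f (∑ i, t i ^ 2) (√(Fintype.card ι) * t i₀) := by
  classical
  have hLp (g : EuclideanSpace ℝ ι → G) : ∫ t : ι → ℝ, g (WithLp.toLp 2 t) = ∫ x, g x :=
    (EuclideanSpace.volume_preserving_symm_measurableEquiv_toLp ι).symm.integral_comp' g
  have hnorm : ‖WithLp.toLp 2 (fun _ : ι => (1 : ℝ))‖ =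
      ‖EuclideanSpace.single i₀ √(Fintype.card ι)‖ := by
    simp [EuclideanSpace.norm_eq, abs_of_nonneg]
  have key := integral_comp_norm_inner_eq hnorm (fun r s => f (r ^ 2) s)
  simp only [← hLp, EuclideanSpace.norm_eq] at key
  simpa [sq_sqrt, Finset.sum_nonneg, sq_nonneg, EuclideanSpace.inner_single_left, PiLp.inner_apply,
    mul_comm] using key

theorem rpow_neg_div_two_mul_sqrt_pow {x : ℝ} (hx : 0 < x) (n : ℕ) :
    x ^ (-(n : ℝ) / 2) * √x ^ n = 1 := by
  rw [sqrt_eq_rpow, ← rpow_natCast, ← rpow_mul hx.le, ← rpow_add hx]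
  ring_nf
  exact rpow_zero x

noncomputable def homodyneJointPDF (E : ℝ) (K : ℕ) (t : Fin K → ℝ) : ℝ :=
  π ^ (-(K : ℝ) / 2) * (1 + 2 * (K : ℝ) * E) ^ (-(1 : ℝ) / 2) *
    exp (-∑ i, t i ^ 2 + 2 * E * (∑ i, t i) ^ 2 / (1 + 2 * (K : ℝ) * E))

noncomputable def homodynePDF (E x : ℝ) : ℝ :=
  (π * (1 + 2 * E)) ^ (-(1 : ℝ) / 2) * exp (-x ^ 2 / (1 + 2 * E))

/-- `homodyneJointPDF E K t * log (homodyneJointPDF E K t / ∏ i, homodynePDF E (t i))` as a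
function of `p = ∑ tᵢ²` and `s = ∑ tᵢ`. -/
noncomputable def homodyneIntegrand (E : ℝ) (K : ℕ) (p s : ℝ) : ℝ :=
  π ^ (-(K : ℝ) / 2) * (1 + 2 * (K : ℝ) * E) ^ (-(1 : ℝ) / 2) *
    exp (-p + 2 * E * s ^ 2 / (1 + 2 * K * E)) *
    (1 / 2 * log ((1 + 2 * E) ^ K / (1 + 2 * K * E)) -
      2 * E / (1 + 2 * E) * p + 2 * E / (1 + 2 * K * E) * s ^ 2)

/-- Precisions of the joint density in coordinates whose first axis is the diagonal. -/
noncomputable def rotatedPrecision (E : ℝ) (n : ℕ) : Fin (n + 1) → ℝ :=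
  Fin.cons (1 + 2 * ((n + 1 : ℕ) : ℝ) * E)⁻¹ fun _ => 1

/-- Coefficients of the quadratic part of the log-ratio in the same coordinates. -/
noncomputable def rotatedLogRatioCoeff (E : ℝ) (n : ℕ) : Fin (n + 1) → ℝ :=
  Fin.cons (2 * E * ((n + 1 : ℕ) : ℝ) / (1 + 2 * ((n + 1 : ℕ) : ℝ) * E) - 2 * E / (1 + 2 * E))
    fun _ => -(2 * E / (1 + 2 * E))

section Homodyne

variable {E : ℝ}

theorem log_homodyneJointPDF (hE : 0 ≤ E) {K : ℕ} (t : Fin K → ℝ) :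
    log (homodyneJointPDF E K t) = -(K / 2) * log π - 1 / 2 * log (1 + 2 * K * E) -
      ∑ i, t i ^ 2 + 2 * E / (1 + 2 * K * E) * (∑ i, t i) ^ 2 := by
  have hσ : 0 < 1 + 2 * (K : ℝ) * E := by positivity
  rw [homodyneJointPDF, log_mul (by positivity) (exp_ne_zero _),
    log_mul (by positivity) (by positivity), log_rpow pi_pos, log_rpow hσ, log_exp]
  ring

theorem log_homodynePDF (hE : 0 ≤ E) (x : ℝ) :
    log (homodynePDF E x) = -(1 / 2) * (log π + log (1 + 2 * E)) - x ^ 2 / (1 + 2 * E) := by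
  have hτ : 0 < 1 + 2 * E := by positivity
  rw [homodynePDF, log_mul (by positivity) (exp_ne_zero _), log_rpow (by positivity), log_exp,
    log_mul pi_pos.ne' hτ.ne']
  ring

theorem log_homodyneJointPDF_div_prod (hE : 0 ≤ E) {K : ℕ} (t : Fin K → ℝ) :
    log (homodyneJointPDF E K t / ∏ i, homodynePDF E (t i)) =
      1 / 2 * log ((1 + 2 * E) ^ K / (1 + 2 * K * E)) -
        2 * E / (1 + 2 * E) * ∑ i, t i ^ 2 + 2 * E / (1 + 2 * K * E) * (∑ i, t i) ^ 2 := by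
  have hσ : 0 < 1 + 2 * (K : ℝ) * E := by positivity
  have hpos (x : ℝ) : 0 < homodynePDF E x := by unfold homodynePDF; positivity
  rw [log_div (by unfold homodyneJointPDF; positivity)
    (Finset.prod_pos fun i _ => hpos (t i)).ne', log_prod fun i _ => (hpos (t i)).ne',
    log_homodyneJointPDF hE]
  simp only [log_homodynePDF hE, Finset.sum_sub_distrib, Finset.sum_const, Finset.card_univ,
    Fintype.card_fin, nsmul_eq_mul, ← Finset.sum_div]
  rw [log_div (by positivity) hσ.ne', log_pow]
  field_simp
  ring

theorem homodyneJointPDF_mul_log_div_prod (hE : 0 ≤ E) {K : ℕ} (t : Fin K → ℝ) :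
    homodyneJointPDF E K t * log (homodyneJointPDF E K t / ∏ i, homodynePDF E (t i)) =
      homodyneIntegrand E K (∑ i, t i ^ 2) (∑ i, t i) := by
  rw [log_homodyneJointPDF_div_prod hE]
  rfl

theorem rotatedPrecision_pos (hE : 0 ≤ E) (n : ℕ) (i : Fin (n + 1)) : 0 < rotatedPrecision E n i :=
  Fin.cases (inv_pos.2 (by positivity)) (fun _ => one_pos) i

theorem homodyneIntegrand_rotated (hE : 0 ≤ E) (n : ℕ) (u : Fin (n + 1) → ℝ) :
    homodyneIntegrand E (n + 1) (∑ i, u i ^ 2) (√(n + 1 : ℕ) * u 0) =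
      π ^ (-((n + 1 : ℕ) : ℝ) / 2) * (1 + 2 * ((n + 1 : ℕ) : ℝ) * E) ^ (-(1 : ℝ) / 2) *
        (exp (-∑ i, rotatedPrecision E n i * u i ^ 2) *
          (1 / 2 * log ((1 + 2 * E) ^ (n + 1) / (1 + 2 * ((n + 1 : ℕ) : ℝ) * E)) +
            ∑ j, rotatedLogRatioCoeff E n j * u j ^ 2)) := by
  have hshift : 2 * E * (((n + 1 : ℕ) : ℝ) * u 0 ^ 2) / (1 + 2 * ((n + 1 : ℕ) : ℝ) * E) =
      (1 - (1 + 2 * ((n + 1 : ℕ) : ℝ) * E)⁻¹) * u 0 ^ 2 := by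
    field_simp
    ring
  simp only [homodyneIntegrand, rotatedPrecision, rotatedLogRatioCoeff, Fin.sum_univ_succ,
    Fin.cons_zero, Fin.cons_succ, one_mul, ← Finset.mul_sum, mul_pow, sq_sqrt (Nat.cast_nonneg _)]
  rw [hshift]
  ring_nf

theorem normalizer_mul_prod_sqrt_pi_div_rotatedPrecision (hE : 0 ≤ E) (n : ℕ) :
    π ^ (-((n + 1 : ℕ) : ℝ) / 2) * (1 + 2 * ((n + 1 : ℕ) : ℝ) * E) ^ (-(1 : ℝ) / 2) *
      ∏ i, √(π / rotatedPrecision E n i) = 1 := by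
  have hσ : 0 < 1 + 2 * ((n + 1 : ℕ) : ℝ) * E := by positivity
  simp only [Fin.prod_univ_succ, rotatedPrecision, Fin.cons_zero, Fin.cons_succ, div_one,
    Finset.prod_const, Finset.card_univ, Fintype.card_fin, div_inv_eq_mul, sqrt_mul pi_pos.le]
  calc _ = (π ^ (-((n + 1 : ℕ) : ℝ) / 2) * √π ^ (n + 1)) *
        ((1 + 2 * ((n + 1 : ℕ) : ℝ) * E) ^ (-((1 : ℕ) : ℝ) / 2) *
          √(1 + 2 * ((n + 1 : ℕ) : ℝ) * E) ^ 1) := by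
        push_cast
        ring
    _ = 1 := by rw [rpow_neg_div_two_mul_sqrt_pow pi_pos, rpow_neg_div_two_mul_sqrt_pow hσ, one_mul]

theorem sum_rotatedLogRatioCoeff_div_rotatedPrecision (hE : 0 ≤ E) (n : ℕ) :
    ∑ j, rotatedLogRatioCoeff E n j / (2 * rotatedPrecision E n j) = 0 := by
  simp only [Fin.sum_univ_succ, rotatedPrecision, rotatedLogRatioCoeff, Fin.cons_zero,
    Fin.cons_succ, Finset.sum_const, Finset.card_univ, Fintype.card_fin, nsmul_eq_mul]
  field_simp
  push_cast
  ring

end Homodyne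

/-- The Kullback–Leibler divergence (in natural units) between the joint homodyne
outcome density `q̃_E^{(K)}` of `K` detectors and the product of its marginals equals
`(1/2)·ln((1+2E)^K / (1+2KE))`. -/
theorem homodyne_relative_entropy (E : ℝ) (hE : 0 < E) (K : ℕ) (hK : 1 ≤ K) :
    ∫ t : Fin K → ℝ,
        (Real.pi ^ (-(K : ℝ) / 2) * (1 + 2 * (K : ℝ) * E) ^ (-(1 : ℝ) / 2) *
            Real.exp (-∑ i, (t i) ^ 2 +
              2 * E * (∑ i, t i) ^ 2 / (1 + 2 * (K : ℝ) * E))) *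
          Real.log
            ((Real.pi ^ (-(K : ℝ) / 2) * (1 + 2 * (K : ℝ) * E) ^ (-(1 : ℝ) / 2) *
                Real.exp (-∑ i, (t i) ^ 2 +
                  2 * E * (∑ i, t i) ^ 2 / (1 + 2 * (K : ℝ) * E))) /
              ∏ i, (Real.pi * (1 + 2 * E)) ^ (-(1 : ℝ) / 2) *
                Real.exp (-(t i) ^ 2 / (1 + 2 * E))) =
      (1 / 2) * Real.log ((1 + 2 * E) ^ K / (1 + 2 * (K : ℝ) * E)) := by
  obtain ⟨n, rfl⟩ := Nat.exists_eq_add_of_le' hK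
  calc _ = ∫ t : Fin (n + 1) → ℝ, homodyneIntegrand E (n + 1) (∑ i, t i ^ 2) (∑ i, t i) :=
        integral_congr_ae (.of_forall fun t => homodyneJointPDF_mul_log_div_prod hE.le t)
    _ = ∫ u : Fin (n + 1) → ℝ, homodyneIntegrand E (n + 1) (∑ i, u i ^ 2) (√(n + 1 : ℕ) * u 0) := by
        rw [integral_comp_sum_sq_sum_eq _ 0, Fintype.card_fin]
    _ = _ := by
        simp only [homodyneIntegrand_rotated hE.le]
        rw [integral_const_mul,
          integral_exp_neg_sum_mul_sq_mul_add_sum (rotatedPrecision_pos hE.le n), ← mul_assoc,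
          normalizer_mul_prod_sqrt_pi_div_rotatedPrecision hE.le,
          sum_rotatedLogRatioCoeff_div_rotatedPrecision hE.le, one_mul, add_zero]
end

section
/- Let K ≥ 1 be a natural number. For E > 0 set a(E) = (1+K·E)^{−1} and b(E) = (1+E)^{−1}, and define D_PH(E) = a(E)·ln(a(E)/b(E)) + (1−a(E))·ln((1−a(E))/(1−b(E))) + (K−1)·ln(1+E). Then as E → 0⁺, D_PH(E) = K·(ln K)·E + O(E²); that is, the function E ↦ D_PH(E) − K·(ln K)·E is O(E²) with respect to the filter of punctured right-neighborhoods of 0. -/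
open Filter Topology Asymptotics

/-! The logarithms in `D_PH` collapse:
`D_PH(E) - K ln K · E = K (ln(1+E) - E) - (ln(1+KE) - KE) - K² ln K · E² / (1+KE)`,
and each of the three terms is `O(E²)` because `ln(1+x) = x + O(x²)`. -/

theorem Real.isBigO_log_one_add_sub_self :
    (fun x : ℝ => Real.log (1 + x) - x) =O[𝓝 0] fun x => x ^ 2 := by
  have hc := (Complex.log_sub_self_isBigO.comp_tendsto
    (Complex.continuous_ofReal.tendsto' 0 0 Complex.ofReal_zero)).norm_norm
  have hpos : ∀ᶠ x : ℝ in 𝓝 0, 0 < 1 + x := by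
    filter_upwards [Ioo_mem_nhds (show (-1 : ℝ) < 0 by norm_num) one_pos] with x hx
    linarith [hx.1]
  refine isBigO_norm_norm.mp (hc.congr' ?_ (.of_forall fun x => ?_))
  · filter_upwards [hpos] with x hx
    simp [← Complex.ofReal_one, ← Complex.ofReal_add, ← Complex.ofReal_log hx.le,
      ← Complex.ofReal_sub]
  · simp [← Complex.ofReal_pow]

/-- `D_PH(E)`, with `a = (1+KE)⁻¹` and `b = (1+E)⁻¹` written out. -/
noncomputable def photonCountingExponent (K E : ℝ) : ℝ :=
  (1 + K * E)⁻¹ * Real.log ((1 + K * E)⁻¹ / (1 + E)⁻¹) +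
    (1 - (1 + K * E)⁻¹) * Real.log ((1 - (1 + K * E)⁻¹) / (1 - (1 + E)⁻¹)) +
    (K - 1) * Real.log (1 + E)

theorem photonCountingExponent_sub_eq {K E : ℝ} (hK : K ≠ 0) (hE : E ≠ 0)
    (hE₁ : 1 + E ≠ 0) (hKE₁ : 1 + K * E ≠ 0) :
    photonCountingExponent K E - K * Real.log K * E =
      K * (Real.log (1 + E) - E) - (Real.log (1 + K * E) - K * E) -
        K ^ 2 * Real.log K * E ^ 2 / (1 + K * E) := by
  have h_one_sub_a : 1 - (1 + K * E)⁻¹ = K * E / (1 + K * E) := by field_simp; ring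
  have h_one_sub_b : 1 - (1 + E)⁻¹ = E / (1 + E) := by field_simp; ring
  have h_ratio : K * E / (1 + K * E) / (E / (1 + E)) = K * (1 + E) / (1 + K * E) := by
    field_simp
  rw [photonCountingExponent, h_one_sub_a, h_one_sub_b, h_ratio, inv_div_inv,
    Real.log_div hE₁ hKE₁, Real.log_div (mul_ne_zero hK hE₁) hKE₁, Real.log_mul hK hE₁]
  field_simp
  ring

theorem isBigO_sq_mul_div_one_add_mul (c K : ℝ) :
    (fun E : ℝ => c * E ^ 2 / (1 + K * E)) =O[𝓝 0] fun E => E ^ 2 := by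
  have h : ContinuousAt (fun E : ℝ => c / (1 + K * E)) 0 :=
    continuousAt_const.div (by fun_prop) (by simp)
  simpa using ((h.tendsto.isBigO_one ℝ).mul (isBigO_refl (fun E : ℝ => E ^ 2) _)).congr_left
    fun E => by ring

/-- Low-energy expansion of the photon-counting (Hadamard interferometer) error
exponent: with `a(E) = (1+KE)⁻¹`, `b(E) = (1+E)⁻¹` and
`D_PH(E) = a·ln(a/b) + (1−a)·ln((1−a)/(1−b)) + (K−1)·ln(1+E)`, we have
`D_PH(E) = K·(ln K)·E + O(E²)` as `E → 0⁺`. -/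
theorem photon_counting_exponent_expansion (K : ℕ) (hK : 1 ≤ K) :
    (fun E : ℝ =>
        ((1 + (K : ℝ) * E)⁻¹ * Real.log ((1 + (K : ℝ) * E)⁻¹ / (1 + E)⁻¹) +
            (1 - (1 + (K : ℝ) * E)⁻¹) *
              Real.log ((1 - (1 + (K : ℝ) * E)⁻¹) / (1 - (1 + E)⁻¹)) +
            ((K : ℝ) - 1) * Real.log (1 + E)) -
          (K : ℝ) * Real.log (K : ℝ) * E) =O[𝓝[>] (0 : ℝ)]
      fun E : ℝ => E ^ 2 := by
  have hK₀ : (K : ℝ) ≠ 0 := Nat.cast_ne_zero.mpr (by omega)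
  have h_log := Real.isBigO_log_one_add_sub_self
  have h_log_scaled : (fun E : ℝ => Real.log (1 + K * E) - K * E) =O[𝓝 0] fun E => E ^ 2 :=
    (h_log.comp_tendsto ((continuous_const_mul (K : ℝ)).tendsto' 0 0 (mul_zero _))).trans
      ((isBigO_refl _ _).const_mul_left ((K : ℝ) ^ 2) |>.congr_left fun E => by simp [mul_pow])
  have h_expansion := ((h_log.const_mul_left (K : ℝ)).sub h_log_scaled).sub
    (isBigO_sq_mul_div_one_add_mul ((K : ℝ) ^ 2 * Real.log K) K)
  refine (h_expansion.mono nhdsWithin_le_nhds).congr' ?_ .rfl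
  filter_upwards [self_mem_nhdsWithin] with E (hE : 0 < E)
  exact (photonCountingExponent_sub_eq hK₀ hE.ne' (by positivity) (by positivity)).symm
end

section
/- Let z ≥ 0 be a real number and N ≥ 1 a natural number. Then e^{−z} · Σ_{n=0}^{N} z^n/n! ≥ 1 − (max{2, z})^N / N!. -/
set_option maxHeartbeats 1000000

/-- Poisson tail bound: for `z ≥ 0` and `N ≥ 1`,
`e^{−z} · Σ_{n=0}^{N} z^n/n! ≥ 1 − (max{2,z})^N / N!`. -/
theorem poisson_tail_bound (z : ℝ) (hz : 0 ≤ z) (N : ℕ) (hN : 1 ≤ N) :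
    1 - (max 2 z) ^ N / (N.factorial : ℝ) ≤
      Real.exp (-z) * ∑ n ∈ Finset.range (N + 1), z ^ n / (n.factorial : ℝ) := by
  have hM : (0:ℝ) ≤ max 2 z := le_trans (by norm_num) (le_max_left _ _)
  by_cases hcase : z ≤ N + 1
  · -- tail estimate
    have hsum := Real.summable_pow_div_factorial z
    have hexp : Real.exp z = ∑' n : ℕ, z ^ n / n.factorial := by
      rw [Real.exp_eq_exp_ℝ, NormedSpace.exp_eq_tsum_div]
    have hsplit := Summable.sum_add_tsum_nat_add (N + 1) hsum
    -- tail term bound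
    have hterm : ∀ n : ℕ, z ^ (n + (N + 1)) / ((n + (N + 1)).factorial : ℝ)
        ≤ z ^ (N + 1) / ((N + 1).factorial : ℝ) * (z ^ n / n.factorial) := by
      intro n
      rw [pow_add, div_mul_div_comm]
      rw [mul_comm (z ^ (N+1)) (z ^ n)]
      apply div_le_div_of_nonneg_left (by positivity) (by positivity)
      have := Nat.factorial_mul_factorial_dvd_factorial_add (N + 1) n
      have hle : (N + 1).factorial * n.factorial ≤ (n + (N + 1)).factorial := by
        rw [add_comm n (N+1)]
        exact Nat.le_of_dvd (Nat.factorial_pos _) this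
      calc ((N + 1).factorial : ℝ) * n.factorial = ((N+1).factorial * n.factorial : ℕ) := by
            push_cast; ring
        _ ≤ ((n + (N + 1)).factorial : ℕ) := by exact_mod_cast hle
    have hsum2 : Summable (fun n : ℕ => z ^ (N + 1) / ((N + 1).factorial : ℝ) * (z ^ n / n.factorial)) :=
      hsum.mul_left _
    have htail : (∑' n : ℕ, z ^ (n + (N + 1)) / ((n + (N + 1)).factorial : ℝ))
        ≤ z ^ (N + 1) / ((N + 1).factorial : ℝ) * Real.exp z := by
      rw [hexp, ← tsum_mul_left]
      exact Summable.tsum_le_tsum hterm ((summable_nat_add_iff (N+1)).mpr hsum) hsum2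
    -- so exp z - partial sum ≤ z^{N+1}/(N+1)! * exp z
    have key : Real.exp z - ∑ n ∈ Finset.range (N + 1), z ^ n / (n.factorial : ℝ)
        ≤ z ^ (N + 1) / ((N + 1).factorial : ℝ) * Real.exp z := by
      have : Real.exp z - ∑ n ∈ Finset.range (N + 1), z ^ n / (n.factorial : ℝ)
          = ∑' n : ℕ, z ^ (n + (N + 1)) / ((n + (N + 1)).factorial : ℝ) := by
        rw [hexp, ← hsplit]; ring
      rw [this]; exact htail
    have hepos : (0:ℝ) < Real.exp z := Real.exp_pos z
    -- multiply by e^{-z}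
    have step : 1 - Real.exp (-z) * ∑ n ∈ Finset.range (N + 1), z ^ n / (n.factorial : ℝ)
        ≤ z ^ (N + 1) / ((N + 1).factorial : ℝ) := by
      have h := mul_le_mul_of_nonneg_left key (le_of_lt (Real.exp_pos (-z)))
      have h1 : Real.exp (-z) * Real.exp z = 1 := by
        rw [← Real.exp_add]; simp
      have h2 : Real.exp (-z) * (z ^ (N + 1) / ((N + 1).factorial : ℝ) * Real.exp z)
          = z ^ (N + 1) / ((N + 1).factorial : ℝ) := by
        rw [mul_comm, mul_assoc, mul_comm (Real.exp z), h1, mul_one]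
      rw [mul_sub, h2] at h
      nlinarith [h, h1]
    have hfinal : z ^ (N + 1) / ((N + 1).factorial : ℝ) ≤ (max 2 z) ^ N / (N.factorial : ℝ) := by
      have hzM : z ^ N ≤ (max 2 z) ^ N := pow_le_pow_left₀ hz (le_max_right _ _) N
      have hNf : (0:ℝ) < N.factorial := by exact_mod_cast Nat.factorial_pos N
      rw [Nat.factorial_succ, pow_succ]
      push_cast
      rw [div_le_div_iff₀ (by positivity) hNf]
      calc z ^ N * z * (N.factorial:ℝ) ≤ (max 2 z) ^ N * ((N:ℝ)+1) * N.factorial := by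
            apply mul_le_mul_of_nonneg_right _ (le_of_lt hNf)
            exact mul_le_mul hzM hcase hz (by positivity)
        _ = (max 2 z) ^ N * (((N:ℝ)+1) * N.factorial) := by ring
    linarith
  · -- z > N + 1 ≥ 2 : RHS of the bound is ≤ 0
    push_neg at hcase
    have h2 : (2:ℝ) ≤ z := le_trans (by exact_mod_cast by linarith [Nat.one_le_iff_ne_zero.mp hN] : (2:ℝ) ≤ (N:ℝ) + 1) (le_of_lt hcase)
    have hMz : max 2 z = z := max_eq_right h2
    have hfac : (N.factorial : ℝ) ≤ z ^ N := by
      calc (N.factorial : ℝ) ≤ ((N ^ N : ℕ) : ℝ) := by exact_mod_cast Nat.factorial_le_pow N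
        _ = (N:ℝ) ^ N := by push_cast; ring
        _ ≤ z ^ N := pow_le_pow_left₀ (by positivity) (by linarith) N
    have h1 : (1:ℝ) ≤ (max 2 z) ^ N / (N.factorial : ℝ) := by
      rw [hMz, le_div_iff₀ (by exact_mod_cast Nat.factorial_pos N), one_mul]
      exact hfac
    have hnn : 0 ≤ Real.exp (-z) * ∑ n ∈ Finset.range (N + 1), z ^ n / (n.factorial : ℝ) := by
      apply mul_nonneg (le_of_lt (Real.exp_pos _))
      apply Finset.sum_nonneg; intro n _; positivity
    linarith
end

section
/- Let z ≥ 0 be a real number and N ≥ 1 a natural number with N ≥ 8·e·max{2, z} (e being Euler's number). Then e^{−z} · Σ_{n=0}^{N} z^n/n! ≥ 1 − 4^{−N}. -/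
/-!
By the weak Stirling bound `n ^ n / n! ≤ e ^ n`, each term of the exponential series satisfies
`x ^ n / n! ≤ (e x / n) ^ n ≤ r⁻¹ ^ n` as soon as `n ≥ r e x`. Beyond `M ≥ r e x` the series is
therefore dominated by a geometric series, so `e ^ x - ∑_{n<M} x ^ n / n! ≤ r⁻¹ ^ M / (1 - r⁻¹)`;
multiplying by `e ^ (-x) ≤ 1` and taking `r = 8`, `M = N + 1` gives `1 - 8⁻¹ ^ N / 7 ≥ 1 - 4⁻¹ ^ N`.
-/

open Real Finset
open scoped Nat

lemma pow_div_factorial_le_exp_one_mul_div_pow {x : ℝ} (hx : 0 ≤ x) (n : ℕ) :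
    x ^ n / n ! ≤ (exp 1 * x / n) ^ n := by
  rcases n.eq_zero_or_pos with rfl | hn
  · simp
  have hn' : (0 : ℝ) < n := by exact_mod_cast hn
  have stirling : (n : ℝ) ^ n / n ! ≤ exp 1 ^ n := by
    rw [← exp_nat_mul, mul_one]
    exact pow_div_factorial_le_exp _ hn'.le n
  calc x ^ n / n ! = (x / n) ^ n * ((n : ℝ) ^ n / n !) := by
        rw [div_pow]; field_simp
    _ ≤ (x / n) ^ n * exp 1 ^ n := by gcongr
    _ = (exp 1 * x / n) ^ n := by rw [← mul_pow]; ring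

lemma pow_div_factorial_le_inv_pow {x r : ℝ} (hx : 0 ≤ x) (hr : 0 < r) {n : ℕ}
    (hn : r * exp 1 * x ≤ n) : x ^ n / n ! ≤ r⁻¹ ^ n := by
  refine (pow_div_factorial_le_exp_one_mul_div_pow hx n).trans (pow_le_pow_left₀ ?_ ?_ n)
  · positivity
  rcases n.eq_zero_or_pos with rfl | hn₀
  · simp [hr.le]
  rw [div_le_iff₀ (by exact_mod_cast hn₀), ← div_eq_inv_mul, le_div_iff₀ hr]
  linarith

lemma exp_sub_sum_range_le {x r : ℝ} (hx : 0 ≤ x) (hr : 1 < r) {M : ℕ}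
    (hM : r * exp 1 * x ≤ M) :
    exp x - ∑ n ∈ range M, x ^ n / n ! ≤ r⁻¹ ^ M / (1 - r⁻¹) := by
  have hr₀ : 0 < r := one_pos.trans hr
  have tail : HasSum (fun n ↦ x ^ (n + M) / (n + M)!) (exp x - ∑ n ∈ range M, x ^ n / n !) := by
    rw [exp_eq_exp_ℝ]
    exact (hasSum_nat_add_iff' M).mpr (NormedSpace.expSeries_div_hasSum_exp x)
  have geometric : HasSum (fun n ↦ r⁻¹ ^ (n + M)) (r⁻¹ ^ M / (1 - r⁻¹)) := by
    simpa [pow_add, div_eq_mul_inv, mul_comm] using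
      (hasSum_geometric_of_lt_one (by positivity) (inv_lt_one_of_one_lt₀ hr)).mul_left (r⁻¹ ^ M)
  refine hasSum_le (fun n ↦ pow_div_factorial_le_inv_pow hx hr₀ ?_) tail geometric
  push_cast
  linarith [(by positivity : (0 : ℝ) ≤ n)]

lemma one_sub_le_exp_neg_mul_sum_range {x r : ℝ} (hx : 0 ≤ x) (hr : 1 < r) {M : ℕ}
    (hM : r * exp 1 * x ≤ M) :
    1 - r⁻¹ ^ M / (1 - r⁻¹) ≤ exp (-x) * ∑ n ∈ range M, x ^ n / n ! := by
  have tail_nonneg : 0 ≤ exp x - ∑ n ∈ range M, x ^ n / n ! :=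
    sub_nonneg.mpr (sum_le_exp_of_nonneg hx M)
  have exp_neg_le_one : exp (-x) ≤ 1 := exp_le_one_iff.mpr (neg_nonpos.mpr hx)
  have split : exp (-x) * ∑ n ∈ range M, x ^ n / n !
      = 1 - exp (-x) * (exp x - ∑ n ∈ range M, x ^ n / n !) := by
    rw [mul_sub, ← exp_add, neg_add_cancel, exp_zero]; ring
  rw [split]
  nlinarith [exp_sub_sum_range_le hx hr hM]

theorem poisson_tail_bound_exponential_general (z : ℝ) (hz : 0 ≤ z) (N : ℕ)
    (hNz : 8 * Real.exp 1 * max 2 z ≤ (N : ℝ)) :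
    1 - ((4 : ℝ) ^ N)⁻¹ ≤
      Real.exp (-z) * ∑ n ∈ Finset.range (N + 1), z ^ n / (n.factorial : ℝ) := by
  have hM : 8 * exp 1 * z ≤ ((N + 1 : ℕ) : ℝ) := by
    push_cast
    nlinarith [exp_pos 1, le_max_right 2 z]
  refine le_trans ?_ (one_sub_le_exp_neg_mul_sum_range hz (by norm_num) hM)
  have eighth_le_quarter : (8 : ℝ)⁻¹ ^ N ≤ (4 ^ N)⁻¹ := by
    rw [← inv_pow]; exact pow_le_pow_left₀ (by norm_num) (by norm_num) N
  have geometric_tail : (8 : ℝ)⁻¹ ^ (N + 1) / (1 - 8⁻¹) = 8⁻¹ ^ N / 7 := by ring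
  rw [geometric_tail]
  linarith [pow_nonneg (by norm_num : (0 : ℝ) ≤ 8⁻¹) N]

/-- Exponential Poisson tail bound: for `z ≥ 0` and `N ≥ 1` with
`N ≥ 8·e·max{2,z}`, we have `e^{−z} · Σ_{n=0}^{N} z^n/n! ≥ 1 − 4^{−N}`. -/
theorem poisson_tail_bound_exponential (z : ℝ) (hz : 0 ≤ z) (N : ℕ) (hN : 1 ≤ N)
    (hNz : 8 * Real.exp 1 * max 2 z ≤ (N : ℝ)) :
    1 - ((4 : ℝ) ^ N)⁻¹ ≤
      Real.exp (-z) * ∑ n ∈ Finset.range (N + 1), z ^ n / (n.factorial : ℝ) :=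
  poisson_tail_bound_exponential_general z hz N hNz
end

section
/- Let K ≥ 2 be a natural number and E ≥ 0 a real number. Let V be the 2K×2K complex matrix with entries V_{jj} = 1+2E, V_{jk} = 2E whenever j ≠ k and j ≡ k (mod 2), and V_{jk} = 0 otherwise, and let Ω be the 2K×2K block-diagonal matrix with K diagonal blocks equal to ω = [[0,1],[−1,0]]. Then the vector v ∈ ℂ^{2K} with v_{2k−1} = i and v_{2k} = 1 for k = 1,…,K (i the imaginary unit) satisfies (i·Ω·V)·v = (1+2K·E)·v; that is, v is an eigenvector of i·Ω·V with eigenvalue 1+2K·E. -/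
lemma sum_parity (K : ℕ) (c : ℂ) (r : ℕ) (hr : r < 2) :
    ∑ k ∈ Finset.range (2 * K), (if k % 2 = r then c else 0) = K * c := by
  induction K with
  | zero => simp
  | succ n ih =>
    have h : 2 * (n + 1) = (2 * n + 1) + 1 := by ring
    rw [h, Finset.sum_range_succ, Finset.sum_range_succ, ih]
    have h0 : (2 * n) % 2 = 0 := by omega
    have h1 : (2 * n + 1) % 2 = 1 := by omega
    rw [h0, h1]
    interval_cases r <;> simp <;> ring

/-- The vector `v` with `v_{2k−1} = i`, `v_{2k} = 1` (1-indexed; even/odd positions in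
0-indexing) is an eigenvector of `i·Ω·V` with eigenvalue `1 + 2KE`, where `V` is the
covariance matrix of the correlated thermal-coherent state and `Ω` the symplectic form. -/
theorem eigenvector_of_symplectic_covariance (K : ℕ) (hK : 2 ≤ K) (E : ℝ) (hE : 0 ≤ E)
    (V Ω : Matrix (Fin (2 * K)) (Fin (2 * K)) ℂ)
    (hV : ∀ j k, V j k =
      if j = k then ((1 + 2 * E : ℝ) : ℂ)
      else if (j : ℕ) % 2 = (k : ℕ) % 2 then ((2 * E : ℝ) : ℂ) else 0)
    (hΩ : ∀ j k, Ω j k =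
      if (j : ℕ) % 2 = 0 ∧ (k : ℕ) = (j : ℕ) + 1 then 1
      else if (k : ℕ) % 2 = 0 ∧ (j : ℕ) = (k : ℕ) + 1 then -1 else 0) :
    (Complex.I • (Ω * V)).mulVec
        (fun j => if (j : ℕ) % 2 = 0 then Complex.I else 1) =
      ((1 + 2 * (K : ℝ) * E : ℝ) : ℂ) •
        (fun j : Fin (2 * K) => if (j : ℕ) % 2 = 0 then Complex.I else 1) := by
  set v : Fin (2 * K) → ℂ := fun j => if (j : ℕ) % 2 = 0 then Complex.I else 1 with hv
  set c : ℂ := ((1 + 2 * (K : ℝ) * E : ℝ) : ℂ) with hc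
  have hVv : V.mulVec v = fun m => c * v m := by
    funext m
    have hsplit : ∀ k : Fin (2 * K), V m k * v k =
        (if m = k then v k else 0) +
        (if (k : ℕ) % 2 = (m : ℕ) % 2 then ((2 * E : ℝ) : ℂ) * v m else 0) := by
      intro k
      rw [hV]
      by_cases h1 : m = k
      · subst h1
        rw [if_pos rfl, if_pos rfl, if_pos rfl]
        push_cast; ring
      · rw [if_neg h1, if_neg h1]
        by_cases h2 : (m : ℕ) % 2 = (k : ℕ) % 2
        · rw [if_pos h2, if_pos h2.symm]
          have hvk : v k = v m := by simp only [hv]; rw [← h2]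
          rw [hvk]; ring
        · rw [if_neg h2, if_neg (fun h => h2 h.symm)]; ring
    have hm : V.mulVec v m = ∑ k : Fin (2 * K), V m k * v k := rfl
    rw [hm]
    simp_rw [hsplit]
    rw [Finset.sum_add_distrib, Finset.sum_ite_eq Finset.univ m v]
    have hsum : ∑ k : Fin (2 * K),
        (if (k : ℕ) % 2 = (m : ℕ) % 2 then ((2 * E : ℝ) : ℂ) * v m else 0)
        = K * (((2 * E : ℝ) : ℂ) * v m) := by
      rw [Fin.sum_univ_eq_sum_range
        (fun k => if k % 2 = (m : ℕ) % 2 then ((2 * E : ℝ) : ℂ) * v m else 0)]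
      exact sum_parity K _ _ (Nat.mod_lt _ (by norm_num))
    rw [hsum]
    simp only [Finset.mem_univ, if_true, hc]
    push_cast
    ring
  rw [Matrix.smul_mulVec, ← Matrix.mulVec_mulVec, hVv]
  funext j
  have hlt : (j : ℕ) < 2 * K := j.isLt
  by_cases hj : (j : ℕ) % 2 = 0
  · have hj1 : (j : ℕ) + 1 < 2 * K := by omega
    set k0 : Fin (2 * K) := ⟨(j : ℕ) + 1, hj1⟩ with hk0
    have hΩv : Ω.mulVec (fun m => c * v m) j = c * v k0 := by
      show (∑ k : Fin (2 * K), Ω j k * (c * v k)) = _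
      rw [Finset.sum_eq_single k0]
      · rw [hΩ, if_pos ⟨hj, rfl⟩]; ring
      · intro k _ hk
        rw [hΩ]
        have h1 : ¬((j : ℕ) % 2 = 0 ∧ (k : ℕ) = (j : ℕ) + 1) := by
          rintro ⟨-, h⟩; exact hk (Fin.ext h)
        have h2 : ¬((k : ℕ) % 2 = 0 ∧ (j : ℕ) = (k : ℕ) + 1) := by
          rintro ⟨h, h'⟩; omega
        rw [if_neg h1, if_neg h2]; ring
      · simp
    simp only [Pi.smul_apply, hΩv, smul_eq_mul]
    have hk0v : v k0 = 1 := by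
      simp only [hv]; rw [if_neg (show ¬((k0:ℕ) % 2 = 0) by rw [show (k0:ℕ) = (j:ℕ)+1 from rfl]; omega)]
    have hjv : v j = Complex.I := by simp only [hv]; rw [if_pos hj]
    rw [hk0v, hjv]; ring
  · have hj1 : 1 ≤ (j : ℕ) := by omega
    have hj2 : (j : ℕ) - 1 < 2 * K := by omega
    set k0 : Fin (2 * K) := ⟨(j : ℕ) - 1, hj2⟩ with hk0
    have hΩv : Ω.mulVec (fun m => c * v m) j = -(c * v k0) := by
      show (∑ k : Fin (2 * K), Ω j k * (c * v k)) = _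
      rw [Finset.sum_eq_single k0]
      · rw [hΩ]
        have h1 : ¬((j : ℕ) % 2 = 0 ∧ (k0 : ℕ) = (j : ℕ) + 1) := by
          rintro ⟨h, -⟩; exact hj h
        have h2 : (k0 : ℕ) % 2 = 0 ∧ (j : ℕ) = (k0 : ℕ) + 1 := by
          refine ⟨?_, ?_⟩ <;> simp only [hk0] <;> omega
        rw [if_neg h1, if_pos h2]; ring
      · intro k _ hk
        rw [hΩ]
        have h1 : ¬((j : ℕ) % 2 = 0 ∧ (k : ℕ) = (j : ℕ) + 1) := by
          rintro ⟨h, -⟩; exact hj h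
        have h2 : ¬((k : ℕ) % 2 = 0 ∧ (j : ℕ) = (k : ℕ) + 1) := by
          rintro ⟨h, h'⟩
          exact hk (Fin.ext (by simp only [hk0]; omega))
        rw [if_neg h1, if_neg h2]; ring
      · simp
    simp only [Pi.smul_apply, hΩv, smul_eq_mul]
    have hk0v : v k0 = Complex.I := by
      simp only [hv]; rw [if_pos (show (k0:ℕ) % 2 = 0 by rw [show (k0:ℕ) = (j:ℕ)-1 from rfl]; omega)]
    have hjv : v j = 1 := by simp only [hv]; rw [if_neg hj]
    rw [hk0v, hjv]
    linear_combination (-c) * Complex.I_mul_I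
end

section
/- Let K ≥ 2 be a natural number and E ≥ 0 a real number. Let V be the 2K×2K complex matrix with entries V_{jj} = 1+2E, V_{jk} = 2E whenever j ≠ k and j ≡ k (mod 2), and V_{jk} = 0 otherwise, and let Ω be the 2K×2K block-diagonal matrix with K diagonal blocks equal to ω = [[0,1],[−1,0]]. Then for each j ∈ {2,…,K}, the vector w^{(j)} ∈ ℂ^{2K} with entries w^{(j)}_1 = 1, w^{(j)}_2 = −i, w^{(j)}_{2j−1} = −1, w^{(j)}_{2j} = i, and all other entries 0, satisfies (i·Ω·V)·w^{(j)} = w^{(j)}; in particular i·Ω·V has 1 as an eigenvalue with at least K−1 linearly independent eigenvectors. -/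
/-!
`V` is `1 + 2E·P`, where `P` sums a vector over the coordinates of the same parity, so `V` fixes
every vector whose even-indexed and odd-indexed coordinates each sum to zero. `Ω` acts on each
coordinate pair as `ω`, and `i·ω` fixes exactly the pairs `(a, -i·a)`. The vector `w^{(j)}` is made
of the pairs `(1, -i)` and `(-1, i)`, so it has both properties. Finally `w^{(j)}` is the only one
of these vectors that is nonzero at the coordinate `2j - 1`, which gives linear independence.
-/

/-- For `2 ≤ j ≤ K`, the vector `w^{(j)}` with entries `w_1 = 1`, `w_2 = −i`,
`w_{2j−1} = −1`, `w_{2j} = i` (1-indexed) and all other entries `0`; here realized with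
0-indexed positions `0, 1, 2j−2, 2j−1`. -/
noncomputable def eigvecOne (K j : ℕ) : Fin (2 * K) → ℂ := fun m =>
  if (m : ℕ) = 0 then 1
  else if (m : ℕ) = 1 then -Complex.I
  else if (m : ℕ) = 2 * j - 2 then -1
  else if (m : ℕ) = 2 * j - 1 then Complex.I
  else 0

open Matrix Complex

theorem linearIndependent_of_apply_eq_ite {ι n R : Type*} [CommRing R] [NoZeroDivisors R]
    [DecidableEq ι] (v : ι → n → R) (f : ι → n) (c : ι → R) (hc : ∀ i, c i ≠ 0)
    (hv : ∀ i j, v i (f j) = if i = j then c i else 0) : LinearIndependent R v := by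
  rw [linearIndependent_iff']
  intro s g hsum i hi
  have hcoord := congrFun hsum (f i)
  simp only [Finset.sum_apply, Pi.smul_apply, smul_eq_mul, Pi.zero_apply, hv, mul_ite,
    mul_zero, Finset.sum_ite_eq', if_pos hi] at hcoord
  exact (mul_eq_zero.mp hcoord).resolve_right (hc i)

theorem mulVec_eq_smul_of_sum_parity_eq_zero {n : ℕ} {V : Matrix (Fin n) (Fin n) ℂ} {d c : ℂ}
    (hV : ∀ j k, V j k = if j = k then d else if (j : ℕ) % 2 = (k : ℕ) % 2 then c else 0)
    {w : Fin n → ℂ} (hw : ∀ r, ∑ k : Fin n with k.val % 2 = r, w k = 0) :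
    V *ᵥ w = (d - c) • w := by
  have hV_eq : V = (d - c) • (1 : Matrix (Fin n) (Fin n) ℂ) + c • of fun j k : Fin n =>
      if (j : ℕ) % 2 = (k : ℕ) % 2 then (1 : ℂ) else 0 := by
    ext j k
    rw [hV]
    by_cases hjk : j = k
    · simp [hjk]
    · simp [hjk, one_apply_ne hjk]
  ext m
  rw [hV_eq, add_mulVec, smul_mulVec, smul_mulVec, one_mulVec, Pi.add_apply, Pi.smul_apply,
    Pi.smul_apply, add_eq_left, smul_eq_zero]
  right
  simp only [mulVec, dotProduct, of_apply, ite_mul, one_mul, zero_mul]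
  rw [← Finset.sum_filter]
  simpa [eq_comm] using hw ((m : ℕ) % 2)

def IsStandardSymplecticForm {n : ℕ} (Ω : Matrix (Fin n) (Fin n) ℂ) : Prop :=
  ∀ j k, Ω j k =
    if (j : ℕ) % 2 = 0 ∧ (k : ℕ) = (j : ℕ) + 1 then 1
    else if (k : ℕ) % 2 = 0 ∧ (j : ℕ) = (k : ℕ) + 1 then -1 else 0

namespace IsStandardSymplecticForm

theorem mulVec_apply_of_even {n : ℕ} {Ω : Matrix (Fin n) (Fin n) ℂ}
    (hΩ : IsStandardSymplecticForm Ω) (w : Fin n → ℂ) {m k : Fin n}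
    (hm : (m : ℕ) % 2 = 0) (hk : (k : ℕ) = m + 1) :
    (Ω *ᵥ w) m = w k := by
  rw [mulVec, dotProduct, Finset.sum_eq_single k]
  · rw [hΩ m k, if_pos ⟨hm, hk⟩, one_mul]
  · intro l _ hlk
    rw [hΩ m l, if_neg (by grind), if_neg (by omega), zero_mul]
  · simp

theorem mulVec_apply_of_odd {n : ℕ} {Ω : Matrix (Fin n) (Fin n) ℂ}
    (hΩ : IsStandardSymplecticForm Ω) (w : Fin n → ℂ) {m k : Fin n}
    (hk : (k : ℕ) % 2 = 0) (hm : (m : ℕ) = k + 1) :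
    (Ω *ᵥ w) m = -w k := by
  rw [mulVec, dotProduct, Finset.sum_eq_single k]
  · rw [hΩ m k, if_neg (by omega), if_pos ⟨hk, hm⟩, neg_one_mul]
  · intro l _ hlk
    rw [hΩ m l, if_neg (by omega), if_neg (by grind), zero_mul]
  · simp

theorem I_smul_mulVec_eq_self {K : ℕ} {Ω : Matrix (Fin (2 * K)) (Fin (2 * K)) ℂ}
    (hΩ : IsStandardSymplecticForm Ω) {w : Fin (2 * K) → ℂ}
    (hw : ∀ m k : Fin (2 * K), (m : ℕ) % 2 = 0 → (k : ℕ) = m + 1 → w k = -I * w m) :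
    (I • Ω) *ᵥ w = w := by
  ext m
  rw [smul_mulVec, Pi.smul_apply, smul_eq_mul]
  rcases Nat.mod_two_eq_zero_or_one m with hm | hm
  · let k : Fin (2 * K) := ⟨m + 1, by omega⟩
    rw [hΩ.mulVec_apply_of_even w hm (k := k) rfl, hw m k hm rfl]
    linear_combination (-w m) * I_mul_I
  · let k : Fin (2 * K) := ⟨m - 1, by omega⟩
    have hk : (k : ℕ) % 2 = 0 := by simp only [k]; omega
    have hmk : (m : ℕ) = k + 1 := by simp only [k]; omega
    rw [hΩ.mulVec_apply_of_odd w hk hmk, hw k m hk hmk]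
    ring

end IsStandardSymplecticForm

theorem eigvecOne_eq_sum_single {K j : ℕ} (hj : 2 ≤ j) (hjK : j ≤ K) :
    eigvecOne K j =
      Pi.single (⟨0, by omega⟩ : Fin (2 * K)) 1 + Pi.single ⟨1, by omega⟩ (-I)
        + Pi.single ⟨2 * j - 2, by omega⟩ (-1) + Pi.single ⟨2 * j - 1, by omega⟩ I := by
  funext m
  simp only [eigvecOne, Pi.add_apply, Pi.single_apply, Fin.ext_iff]
  split_ifs <;> first | omega | simp

theorem sum_eigvecOne_parity_eq_zero {K j : ℕ} (hj : 2 ≤ j) (hjK : j ≤ K) (r : ℕ) :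
    ∑ k : Fin (2 * K) with k.val % 2 = r, eigvecOne K j k = 0 := by
  have h_even : (2 * j - 2) % 2 = 0 := by omega
  have h_odd : (2 * j - 1) % 2 = 1 := by omega
  simp only [eigvecOne_eq_sum_single hj hjK, Pi.add_apply, Finset.sum_add_distrib,
    Finset.sum_pi_single', Finset.mem_filter, Finset.mem_univ, true_and, h_even, h_odd]
  split_ifs <;> first | omega | simp

theorem eigvecOne_apply_succ {K j : ℕ} (hj : 2 ≤ j) {m k : Fin (2 * K)}
    (hm : (m : ℕ) % 2 = 0) (hk : (k : ℕ) = m + 1) :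
    eigvecOne K j k = -I * eigvecOne K j m := by
  simp only [eigvecOne]
  split_ifs <;> first | omega | simp

theorem eigvecOne_apply_odd {K j p : ℕ} (hj : 2 ≤ j) (hp : 2 ≤ p) (hpK : p ≤ K) :
    eigvecOne K j ⟨2 * p - 1, by omega⟩ = if j = p then I else 0 := by
  simp only [eigvecOne]
  split_ifs <;> first | rfl | omega

theorem eigenvectors_one_of_symplectic_covariance_general (K : ℕ) (E : ℝ)
    (V Ω : Matrix (Fin (2 * K)) (Fin (2 * K)) ℂ)
    (hV : ∀ j k, V j k =
      if j = k then ((1 + 2 * E : ℝ) : ℂ)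
      else if (j : ℕ) % 2 = (k : ℕ) % 2 then ((2 * E : ℝ) : ℂ) else 0)
    (hΩ : ∀ j k, Ω j k =
      if (j : ℕ) % 2 = 0 ∧ (k : ℕ) = (j : ℕ) + 1 then 1
      else if (k : ℕ) % 2 = 0 ∧ (j : ℕ) = (k : ℕ) + 1 then -1 else 0) :
    (∀ j : ℕ, 2 ≤ j → j ≤ K →
        (Complex.I • (Ω * V)).mulVec (eigvecOne K j) = eigvecOne K j) ∧
      LinearIndependent ℂ (fun p : (Set.Icc 2 K : Set ℕ) => eigvecOne K p) := by
  constructor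
  · intro j hj hjK
    have hVw : V *ᵥ eigvecOne K j = eigvecOne K j := by
      rw [mulVec_eq_smul_of_sum_parity_eq_zero hV (sum_eigvecOne_parity_eq_zero hj hjK)]
      push_cast
      rw [add_sub_cancel_right, one_smul]
    have hΩw : (I • Ω) *ᵥ eigvecOne K j = eigvecOne K j :=
      IsStandardSymplecticForm.I_smul_mulVec_eq_self hΩ fun _ _ hm hk =>
        eigvecOne_apply_succ hj hm hk
    rw [← Matrix.smul_mul, ← mulVec_mulVec, hVw, hΩw]
  · refine linearIndependent_of_apply_eq_ite _ (fun p => ⟨2 * p - 1, by grind⟩) (fun _ => I)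
      (fun _ => I_ne_zero) fun p q => ?_
    simp only [eigvecOne_apply_odd p.2.1 q.2.1 q.2.2, Subtype.ext_iff]

/-- Each vector `w^{(j)}` (for `j ∈ {2,…,K}`) is fixed by `i·Ω·V`; in particular `1` is
an eigenvalue of `i·Ω·V` with at least `K − 1` linearly independent eigenvectors. -/
theorem eigenvectors_one_of_symplectic_covariance (K : ℕ) (hK : 2 ≤ K) (E : ℝ)
    (hE : 0 ≤ E) (V Ω : Matrix (Fin (2 * K)) (Fin (2 * K)) ℂ)
    (hV : ∀ j k, V j k =
      if j = k then ((1 + 2 * E : ℝ) : ℂ)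
      else if (j : ℕ) % 2 = (k : ℕ) % 2 then ((2 * E : ℝ) : ℂ) else 0)
    (hΩ : ∀ j k, Ω j k =
      if (j : ℕ) % 2 = 0 ∧ (k : ℕ) = (j : ℕ) + 1 then 1
      else if (k : ℕ) % 2 = 0 ∧ (j : ℕ) = (k : ℕ) + 1 then -1 else 0) :
    (∀ j : ℕ, 2 ≤ j → j ≤ K →
        (Complex.I • (Ω * V)).mulVec (eigvecOne K j) = eigvecOne K j) ∧
      LinearIndependent ℂ (fun p : (Set.Icc 2 K : Set ℕ) => eigvecOne K p) :=
  eigenvectors_one_of_symplectic_covariance_general K E V Ω hV hΩ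
end

section
/- Let E > 0 be a real number and N a natural number. Then (1/(π·E)) · ∫_{ℝ²} exp(−(a²+b²)/E) · exp(−(a²+b²)) · Σ_{n=0}^{N} (a²+b²)^n/n! da db = 1 − (E/(1+E))^{N+1}. -/
open MeasureTheory Real Finset
open scoped Nat

/-!
Expand the truncated exponential: the `n`-th term, `e^{-r/E} e^{-r} r^n/n!` with `r = a² + b²`,
is a Gamma integral in polar coordinates, `∫ r^n e^{-r/q} = π n! q^{n+1}` with `q = E/(1+E)`,
so after normalisation it is the geometric weight `(1 - q) q^n`, whose partial sum over `n ≤ N`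
is `1 - q^{N+1}`.
-/

theorem integral_prod_comp_sq_add_sq {F : Type*} [NormedAddCommGroup F] [NormedSpace ℝ F]
    (f : ℝ → F) :
    ∫ ab : ℝ × ℝ, f (ab.1 ^ 2 + ab.2 ^ 2) = ∫ z : ℂ, f (‖z‖ ^ 2) := by
  rw [← Complex.volume_preserving_equiv_real_prod.integral_comp
    Complex.measurableEquivRealProd.measurableEmbedding]
  congr 1 with z
  rw [Complex.sq_norm, Complex.normSq_apply, ← sq, ← sq]
  rfl

theorem integral_sq_add_sq_pow_mul_exp_neg_mul {c : ℝ} (hc : 0 < c) (n : ℕ) :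
    ∫ ab : ℝ × ℝ, (ab.1 ^ 2 + ab.2 ^ 2) ^ n * exp (-c * (ab.1 ^ 2 + ab.2 ^ 2)) =
      π * n ! / c ^ (n + 1) := by
  have hpolar := Complex.integral_rpow_mul_exp_neg_mul_rpow (p := 2) (q := 2 * n)
    one_le_two (by linarith [n.cast_nonneg (α := ℝ)]) hc
  have hrpow (z : ℂ) : ‖z‖ ^ (2 * (n : ℝ)) = (‖z‖ ^ 2) ^ n := by
    rw [rpow_mul (norm_nonneg z), rpow_two, rpow_natCast]
  have hexp : (-(2 * (n : ℝ) + 2) / 2) = -((n + 1 : ℕ) : ℝ) := by push_cast; ring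
  have hGamma : (2 * (n : ℝ) + 2) / 2 = n + 1 := by ring
  simp only [hrpow, rpow_two] at hpolar
  rw [integral_prod_comp_sq_add_sq (fun r => r ^ n * exp (-c * r)), hpolar, hexp, hGamma,
    Gamma_nat_eq_factorial, rpow_neg hc.le, rpow_natCast]
  field_simp

theorem integral_thermal_mul_poisson {E : ℝ} (hE : 0 < E) (n : ℕ) :
    ∫ ab : ℝ × ℝ, exp (-(ab.1 ^ 2 + ab.2 ^ 2) / E) * exp (-(ab.1 ^ 2 + ab.2 ^ 2)) *
        ((ab.1 ^ 2 + ab.2 ^ 2) ^ n / n !) =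
      π * E * ((1 + E)⁻¹ * (E / (1 + E)) ^ n) := by
  set q := E / (1 + E)
  have hq : 0 < q := by positivity
  have hintegrand (r : ℝ) : exp (-r / E) * exp (-r) * (r ^ n / n !) =
      (n ! : ℝ)⁻¹ * (r ^ n * exp (-q⁻¹ * r)) := by
    rw [← exp_add]
    simp only [q]
    field_simp
    ring_nf
  have hinv : (1 + E)⁻¹ = E⁻¹ * q := by
    simp only [q]
    field_simp
  simp_rw [hintegrand, integral_const_mul, integral_sq_add_sq_pow_mul_exp_neg_mul (inv_pos.2 hq)]
  rw [hinv, inv_pow, div_inv_eq_mul, pow_succ]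
  field_simp

/-- Thermal average of the truncated coherent-state overlap: for `E > 0` and `N : ℕ`,
`(1/(πE)) ∫_{ℝ²} e^{−(a²+b²)/E} e^{−(a²+b²)} Σ_{n=0}^N (a²+b²)^n/n! da db
  = 1 − (E/(1+E))^{N+1}`. -/
theorem thermal_truncation_identity (E : ℝ) (hE : 0 < E) (N : ℕ) :
    (1 / (Real.pi * E)) *
        ∫ ab : ℝ × ℝ,
          Real.exp (-(ab.1 ^ 2 + ab.2 ^ 2) / E) * Real.exp (-(ab.1 ^ 2 + ab.2 ^ 2)) *
            ∑ n ∈ Finset.range (N + 1), (ab.1 ^ 2 + ab.2 ^ 2) ^ n / (n.factorial : ℝ) =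
      1 - (E / (1 + E)) ^ (N + 1) := by
  have hterm := integral_thermal_mul_poisson hE
  have hintegrable (n : ℕ) : Integrable fun ab : ℝ × ℝ =>
      exp (-(ab.1 ^ 2 + ab.2 ^ 2) / E) * exp (-(ab.1 ^ 2 + ab.2 ^ 2)) *
        ((ab.1 ^ 2 + ab.2 ^ 2) ^ n / n !) :=
    Integrable.of_integral_ne_zero (by rw [hterm]; positivity)
  have hone_sub : (1 + E)⁻¹ = 1 - E / (1 + E) := by
    field_simp
    ring
  simp_rw [mul_sum]
  rw [integral_finsetSum _ fun n _ => hintegrable n]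
  simp_rw [hterm, ← mul_sum, hone_sub, mul_neg_geom_sum]
  field_simp
end
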